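/- arXiv:math/0610311 — 3 statements merged into one kernel-verified Lean document; each statement's English description precedes it below -/
import Mathlib

section
/- Let X₁ = iz ∂/∂z − iw ∂/∂w as a holomorphic vector field on ℂ². If Y = f ∂/∂z + g ∂/∂w is a holomorphic vector field on ℂ² satisfying [[Y, X₁], X₁] = −Y, then f is a (convergent) sum of monomials of the form z^m w^m and z^{m+1} w^{m−1} (m ≥ 0 and m ≥ 1 respectively), and g is a sum of monomials of the form z^m w^m and z^{m−1} w^{m+1}. -/
open Complex

/-- The Lie bracket of two holomorphic vector fields,
`[X,Y](p) = DY(p)(X(p)) − DX(p)(Y(p))`. -/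
noncomputable def bracket {E : Type*} [NormedAddCommGroup E] [NormedSpace ℂ E]
    (X Y : E → E) : E → E :=
  fun p => fderiv ℂ Y p (X p) - fderiv ℂ X p (Y p)

set_option maxHeartbeats 1000000

lemma summable_onevar (d : ℕ → ℂ) (h : ∀ z : ℂ, Summable (fun n => d n * z ^ n))
    (r : ℝ) (hr : 0 ≤ r) : Summable (fun n => ‖d n‖ * r ^ n) := by
  set R : ℝ := 2 * r + 1 with hR
  have hRpos : (0:ℝ) < R := by positivity
  have hs := (h (R : ℂ)).norm
  have hterm : ∀ n, ‖d n * (R:ℂ) ^ n‖ = ‖d n‖ * R ^ n := by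
    intro n
    rw [norm_mul, norm_pow, Complex.norm_real, Real.norm_of_nonneg hRpos.le]
  rw [funext hterm] at hs
  set C : ℝ := ∑' n, ‖d n‖ * R ^ n with hC
  have hb : ∀ n, ‖d n‖ * R ^ n ≤ C := fun n => Summable.le_tsum hs n fun m _ => by positivity
  refine Summable.of_nonneg_of_le (fun n => by positivity) (fun n => ?_)
    ((summable_geometric_of_lt_one (by norm_num) (by norm_num : (1/2:ℝ) < 1)).mul_left C)
  have h1 : r ≤ R * (1/2) := by rw [hR]; linarith
  have h2 : r ^ n ≤ (R * (1/2)) ^ n := pow_le_pow_left₀ hr h1 n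
  calc ‖d n‖ * r ^ n ≤ ‖d n‖ * (R * (1/2)) ^ n :=
        mul_le_mul_of_nonneg_left h2 (norm_nonneg _)
    _ = (‖d n‖ * R ^ n) * (1/2) ^ n := by rw [mul_pow]; ring
    _ ≤ C * (1/2) ^ n := mul_le_mul_of_nonneg_right (hb n) (by positivity)

lemma onevar_zero (d : ℕ → ℂ) (h : ∀ z : ℂ, HasSum (fun n => d n * z ^ n) 0) :
    ∀ n, d n = 0 := by
  set p : FormalMultilinearSeries ℂ ℂ ℂ :=
    fun n => ContinuousMultilinearMap.mkPiRing ℂ (Fin n) (d n) with hp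
  have hnorm : Summable fun n => ‖p n‖ * (1:ℝ) ^ n := by
    have := summable_onevar d (fun z => (h z).summable) 1 zero_le_one
    simpa [hp, ContinuousMultilinearMap.norm_mkPiRing] using this
  have hball : HasFPowerSeriesOnBall (0 : ℂ → ℂ) p 0 1 := by
    refine ⟨?_, one_pos, ?_⟩
    · have := p.le_radius_of_summable_norm (r := 1) (by simpa using hnorm)
      simpa using this
    · intro y _
      have hy := h y
      have : ∀ n, p n (fun _ => y) = d n * y ^ n := by
        intro n
        simp [hp, ContinuousMultilinearMap.mkPiRing_apply, Finset.prod_const,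
          smul_eq_mul, mul_comm]
      rw [funext this]
      simpa using hy
  have hz : p = 0 := (hball.hasFPowerSeriesAt).eq_zero
  intro n
  have h0 : p n = 0 := by rw [hz]; rfl
  have := congrArg (fun L : ContinuousMultilinearMap ℂ (fun _ : Fin n => ℂ) ℂ =>
    L (fun _ => (1:ℂ))) h0
  simpa [hp, ContinuousMultilinearMap.mkPiRing_apply] using this

lemma twovar_zero (c : ℕ → ℕ → ℂ)
    (h : ∀ p : ℂ × ℂ, HasSum (fun ab : ℕ × ℕ => c ab.1 ab.2 * p.1 ^ ab.1 * p.2 ^ ab.2) 0) :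
    ∀ a b, c a b = 0 := by
  have hrow' : ∀ (w : ℂ) (a : ℕ), Summable (fun b => c a b * w ^ b) := by
    intro w a
    have := (h (1, w)).summable.comp_injective
      (i := fun b => ((a, b) : ℕ × ℕ)) (fun b b' hb => (Prod.ext_iff.mp hb).2)
    simpa [Function.comp_def] using this
  have key : ∀ (w : ℂ) (a : ℕ), (∑' b, c a b * w ^ b) = 0 := by
    intro w
    apply onevar_zero (fun a => ∑' b, c a b * w ^ b)
    intro z
    have hfib : ∀ a : ℕ, HasSum (fun b => c a b * z ^ a * w ^ b)
        (z ^ a * ∑' b, c a b * w ^ b) := by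
      intro a
      have h2 := ((hrow' w a).hasSum).mul_left (z ^ a)
      have heq : (fun b => z ^ a * (c a b * w ^ b)) = fun b => c a b * z ^ a * w ^ b := by
        funext b; ring
      rwa [heq] at h2
    have h3 := (h (z, w)).prod_fiberwise hfib
    have heq : (fun a => z ^ a * ∑' b, c a b * w ^ b)
        = fun a => (∑' b, c a b * w ^ b) * z ^ a := by
      funext a; ring
    rwa [heq] at h3
  intro a b
  refine onevar_zero (fun b => c a b) ?_ b
  intro w
  have := (hrow' w a).hasSum
  rwa [key w a] at this

lemma summable_weight : Summable (fun n : ℕ => ((n : ℝ) + 1) * (1/2 : ℝ) ^ n) := by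
  have h1 : Summable (fun n : ℕ => (n : ℝ) ^ 1 * (1/2 : ℝ) ^ n) :=
    summable_pow_mul_geometric_of_norm_lt_one 1 (by rw [Real.norm_eq_abs, abs_of_pos] <;> norm_num)
  have h2 : Summable (fun n : ℕ => (1/2 : ℝ) ^ n) :=
    summable_geometric_of_lt_one (by norm_num) (by norm_num)
  have := h1.add h2
  refine this.congr fun n => ?_
  ring

lemma summable_twovar (c : ℕ → ℕ → ℂ)
    (h : ∀ p : ℂ × ℂ, Summable (fun ab : ℕ × ℕ => c ab.1 ab.2 * p.1 ^ ab.1 * p.2 ^ ab.2))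
    (r : ℝ) (hr : 0 ≤ r) :
    Summable (fun ab : ℕ × ℕ =>
      ((ab.1 : ℝ) + (ab.2 : ℝ) + 1) * ‖c ab.1 ab.2‖ * r ^ ab.1 * r ^ ab.2) := by
  set R : ℝ := 2 * r + 1 with hR
  have hRpos : (0:ℝ) < R := by positivity
  have hs := (h ((R : ℂ), (R : ℂ))).norm
  have hterm : ∀ ab : ℕ × ℕ, ‖c ab.1 ab.2 * (R:ℂ) ^ ab.1 * (R:ℂ) ^ ab.2‖
      = ‖c ab.1 ab.2‖ * R ^ ab.1 * R ^ ab.2 := by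
    intro ab
    rw [norm_mul, norm_mul, norm_pow, norm_pow, Complex.norm_real,
      Real.norm_of_nonneg hRpos.le]
  rw [funext hterm] at hs
  set C : ℝ := ∑' ab : ℕ × ℕ, ‖c ab.1 ab.2‖ * R ^ ab.1 * R ^ ab.2 with hC
  have hb : ∀ ab : ℕ × ℕ, ‖c ab.1 ab.2‖ * R ^ ab.1 * R ^ ab.2 ≤ C :=
    fun ab => Summable.le_tsum hs ab fun m _ => by positivity
  have hmaj : Summable (fun ab : ℕ × ℕ =>
      (C * (((ab.1 : ℝ) + 1) * (1/2 : ℝ) ^ ab.1)) * (((ab.2 : ℝ) + 1) * (1/2 : ℝ) ^ ab.2)) :=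
    (summable_weight.mul_left C).mul_of_nonneg summable_weight
      (fun n => mul_nonneg (tsum_nonneg fun ab => by positivity) (by positivity))
      (fun n => by positivity)
  refine Summable.of_nonneg_of_le (fun ab => by positivity) (fun ab => ?_) hmaj
  obtain ⟨a, b⟩ := ab
  simp only
  have h1 : r ≤ R * (1/2) := by rw [hR]; linarith
  have h2 : ‖c a b‖ * r ^ a * r ^ b ≤ C * ((1/2:ℝ) ^ a * (1/2) ^ b) := by
    calc ‖c a b‖ * r ^ a * r ^ b
        ≤ ‖c a b‖ * (R * (1/2)) ^ a * (R * (1/2)) ^ b := by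
          have e1 : r ^ a ≤ (R * (1/2)) ^ a := pow_le_pow_left₀ hr h1 a
          have e2 : r ^ b ≤ (R * (1/2)) ^ b := pow_le_pow_left₀ hr h1 b
          exact mul_le_mul (mul_le_mul_of_nonneg_left e1 (norm_nonneg _)) e2
            (by positivity) (by positivity)
      _ = (‖c a b‖ * R ^ a * R ^ b) * ((1/2:ℝ) ^ a * (1/2) ^ b) := by
          rw [mul_pow, mul_pow]; ring
      _ ≤ C * ((1/2:ℝ) ^ a * (1/2) ^ b) :=
          mul_le_mul_of_nonneg_right (hb (a, b)) (by positivity)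
  have h3 : (a : ℝ) + (b : ℝ) + 1 ≤ ((a : ℝ) + 1) * ((b : ℝ) + 1) := by nlinarith [Nat.cast_nonneg (α := ℝ) a, Nat.cast_nonneg (α := ℝ) b]
  calc ((a : ℝ) + (b : ℝ) + 1) * ‖c a b‖ * r ^ a * r ^ b
      = ((a : ℝ) + (b : ℝ) + 1) * (‖c a b‖ * r ^ a * r ^ b) := by ring
    _ ≤ (((a : ℝ) + 1) * ((b : ℝ) + 1)) * (C * ((1/2:ℝ) ^ a * (1/2) ^ b)) := by
        refine mul_le_mul h3 h2 (by positivity) (by positivity)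
    _ = (C * (((a : ℝ) + 1) * (1/2 : ℝ) ^ a)) * (((b : ℝ) + 1) * (1/2 : ℝ) ^ b) := by ring

noncomputable def phi (a b : ℕ) (cc : ℂ) (p : ℂ × ℂ) : ℂ × ℂ →L[ℂ] ℂ :=
  (cc * a * p.1 ^ (a - 1) * p.2 ^ b) • ContinuousLinearMap.fst ℂ ℂ ℂ
    + (cc * b * p.1 ^ a * p.2 ^ (b - 1)) • ContinuousLinearMap.snd ℂ ℂ ℂ

lemma hasFDerivAt_monomial (a b : ℕ) (cc : ℂ) (p : ℂ × ℂ) :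
    HasFDerivAt (fun q : ℂ × ℂ => cc * q.1 ^ a * q.2 ^ b) (phi a b cc p) p := by
  have h1 : HasFDerivAt (fun q : ℂ × ℂ => q.1 ^ a)
      (((a : ℂ) * p.1 ^ (a - 1)) • ContinuousLinearMap.fst ℂ ℂ ℂ) p :=
    (hasDerivAt_pow a p.1).comp_hasFDerivAt p hasFDerivAt_fst
  have h2 : HasFDerivAt (fun q : ℂ × ℂ => q.2 ^ b)
      (((b : ℂ) * p.2 ^ (b - 1)) • ContinuousLinearMap.snd ℂ ℂ ℂ) p :=
    (hasDerivAt_pow b p.2).comp_hasFDerivAt p hasFDerivAt_snd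
  have h3 := (h1.mul h2).const_mul cc
  have hfun : (fun q : ℂ × ℂ => cc * q.1 ^ a * q.2 ^ b)
      = fun q : ℂ × ℂ => cc * (q.1 ^ a * q.2 ^ b) := by
    funext q; ring
  rw [hfun]
  refine h3.congr_fderiv ?_
  ext v <;> simp [phi, ContinuousLinearMap.smul_apply, smul_eq_mul] <;> ring

lemma phi_apply (a b : ℕ) (cc : ℂ) (p v : ℂ × ℂ) :
    phi a b cc p v = cc * a * p.1 ^ (a - 1) * p.2 ^ b * v.1
      + cc * b * p.1 ^ a * p.2 ^ (b - 1) * v.2 := by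
  simp [phi, smul_eq_mul]

lemma phi_norm_le (a b : ℕ) (cc : ℂ) (x : ℂ × ℂ) {R : ℝ} (hR : 1 ≤ R)
    (hx1 : ‖x.1‖ ≤ R) (hx2 : ‖x.2‖ ≤ R) :
    ‖phi a b cc x‖ ≤ ((a : ℝ) + (b : ℝ) + 1) * ‖cc‖ * R ^ a * R ^ b := by
  have hR0 : (0:ℝ) ≤ R := le_trans zero_le_one hR
  have e1 : ‖x.1‖ ^ (a - 1) ≤ R ^ a :=
    le_trans (pow_le_pow_left₀ (norm_nonneg _) hx1 _) (pow_le_pow_right₀ hR (Nat.sub_le a 1))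
  have e1' : ‖x.1‖ ^ a ≤ R ^ a := pow_le_pow_left₀ (norm_nonneg _) hx1 _
  have e2 : ‖x.2‖ ^ (b - 1) ≤ R ^ b :=
    le_trans (pow_le_pow_left₀ (norm_nonneg _) hx2 _) (pow_le_pow_right₀ hR (Nat.sub_le b 1))
  have e2' : ‖x.2‖ ^ b ≤ R ^ b := pow_le_pow_left₀ (norm_nonneg _) hx2 _
  refine ContinuousLinearMap.opNorm_le_bound _ (by positivity) fun v => ?_
  rw [phi_apply]
  have hv1 : ‖v.1‖ ≤ ‖v‖ := norm_fst_le v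
  have hv2 : ‖v.2‖ ≤ ‖v‖ := norm_snd_le v
  calc ‖cc * a * x.1 ^ (a - 1) * x.2 ^ b * v.1 + cc * b * x.1 ^ a * x.2 ^ (b - 1) * v.2‖
      ≤ ‖cc * (a:ℂ) * x.1 ^ (a - 1) * x.2 ^ b * v.1‖
        + ‖cc * (b:ℂ) * x.1 ^ a * x.2 ^ (b - 1) * v.2‖ := norm_add_le _ _
    _ = ‖cc‖ * (a:ℝ) * ‖x.1‖ ^ (a - 1) * ‖x.2‖ ^ b * ‖v.1‖
        + ‖cc‖ * (b:ℝ) * ‖x.1‖ ^ a * ‖x.2‖ ^ (b - 1) * ‖v.2‖ := by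
        simp [norm_mul, norm_pow]
    _ ≤ ‖cc‖ * (a:ℝ) * R ^ a * R ^ b * ‖v‖
        + ‖cc‖ * (b:ℝ) * R ^ a * R ^ b * ‖v‖ := by
        have t1 : ‖cc‖ * (a:ℝ) * ‖x.1‖ ^ (a - 1) * ‖x.2‖ ^ b * ‖v.1‖
            ≤ ‖cc‖ * (a:ℝ) * R ^ a * R ^ b * ‖v‖ := by
          apply mul_le_mul (by
            apply mul_le_mul (by
              apply mul_le_mul le_rfl e1 (by positivity) (by positivity)) e2'
              (by positivity) (by positivity)) hv1 (norm_nonneg _) (by positivity)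
        have t2 : ‖cc‖ * (b:ℝ) * ‖x.1‖ ^ a * ‖x.2‖ ^ (b - 1) * ‖v.2‖
            ≤ ‖cc‖ * (b:ℝ) * R ^ a * R ^ b * ‖v‖ := by
          apply mul_le_mul (by
            apply mul_le_mul (by
              apply mul_le_mul le_rfl e1' (by positivity) (by positivity)) e2
              (by positivity) (by positivity)) hv2 (norm_nonneg _) (by positivity)
        exact add_le_add t1 t2
    _ ≤ ((a : ℝ) + (b : ℝ) + 1) * ‖cc‖ * R ^ a * R ^ b * ‖v‖ := by
        have h0 : (0:ℝ) ≤ ‖cc‖ * R ^ a * R ^ b * ‖v‖ := by positivity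
        nlinarith [h0]

lemma pow_pred_mul (a : ℕ) (z : ℂ) : (a : ℂ) * z ^ (a - 1) * z = (a : ℂ) * z ^ a := by
  cases a with
  | zero => simp
  | succ n => rw [Nat.succ_sub_one, pow_succ]; ring

lemma phi_apply_X (a b : ℕ) (cc : ℂ) (p : ℂ × ℂ) :
    phi a b cc p (I * p.1, -(I * p.2))
      = (I * ((a : ℂ) - (b : ℂ)) * cc) * p.1 ^ a * p.2 ^ b := by
  rw [phi_apply]
  have h1 : (a : ℂ) * p.1 ^ (a - 1) * p.1 = (a : ℂ) * p.1 ^ a := pow_pred_mul a p.1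
  have h2 : (b : ℂ) * p.2 ^ (b - 1) * p.2 = (b : ℂ) * p.2 ^ b := pow_pred_mul b p.2
  simp only
  linear_combination cc * p.2 ^ b * I * h1 - cc * p.1 ^ a * I * h2

lemma expand_L (c : ℕ → ℕ → ℂ) (F : ℂ × ℂ → ℂ)
    (h : ∀ p : ℂ × ℂ, HasSum (fun ab : ℕ × ℕ => c ab.1 ab.2 * p.1 ^ ab.1 * p.2 ^ ab.2) (F p)) :
    Differentiable ℂ F ∧
    ∀ p : ℂ × ℂ, HasSum (fun ab : ℕ × ℕ =>
      (I * ((ab.1 : ℂ) - (ab.2 : ℂ)) * c ab.1 ab.2) * p.1 ^ ab.1 * p.2 ^ ab.2)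
      (fderiv ℂ F p (I * p.1, -(I * p.2))) := by
  have main : ∀ p : ℂ × ℂ, HasFDerivAt F (∑' ab : ℕ × ℕ, phi ab.1 ab.2 (c ab.1 ab.2) p) p
      ∧ Summable (fun ab : ℕ × ℕ => phi ab.1 ab.2 (c ab.1 ab.2) p) := by
    intro p
    set R : ℝ := ‖p‖ + 1 with hRdef
    have hR1 : 1 ≤ R := by have := norm_nonneg p; rw [hRdef]; linarith
    have hR0 : 0 ≤ R := le_trans zero_le_one hR1
    set s : Set (ℂ × ℂ) := Metric.ball 0 R with hs
    have hmem : ∀ x ∈ s, ‖x.1‖ ≤ R ∧ ‖x.2‖ ≤ R := by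
      intro x hx
      rw [hs, Metric.mem_ball, dist_zero_right] at hx
      exact ⟨le_trans (norm_fst_le x) hx.le, le_trans (norm_snd_le x) hx.le⟩
    have hps : p ∈ s := by
      rw [hs, Metric.mem_ball, dist_zero_right, hRdef]; linarith
    set u : ℕ × ℕ → ℝ := fun ab =>
      ((ab.1 : ℝ) + (ab.2 : ℝ) + 1) * ‖c ab.1 ab.2‖ * R ^ ab.1 * R ^ ab.2 with hu
    have hus : Summable u := summable_twovar c (fun q => (h q).summable) R hR0
    have hbound : ∀ (ab : ℕ × ℕ) (x : ℂ × ℂ), x ∈ s →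
        ‖phi ab.1 ab.2 (c ab.1 ab.2) x‖ ≤ u ab := by
      intro ab x hx
      exact phi_norm_le _ _ _ _ hR1 (hmem x hx).1 (hmem x hx).2
    have hder := hasFDerivAt_tsum_of_isPreconnected hus Metric.isOpen_ball
      (convex_ball (0 : ℂ × ℂ) R).isPreconnected
      (fun ab x _ => hasFDerivAt_monomial ab.1 ab.2 (c ab.1 ab.2) x)
      hbound hps ((h p).summable) hps
    have hFeq : (fun y : ℂ × ℂ => ∑' ab : ℕ × ℕ, c ab.1 ab.2 * y.1 ^ ab.1 * y.2 ^ ab.2) = F :=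
      funext fun y => (h y).tsum_eq
    rw [hFeq] at hder
    exact ⟨hder, Summable.of_norm_bounded hus fun ab => hbound ab p hps⟩
  constructor
  · exact fun p => ((main p).1.differentiableAt)
  · intro p
    have hfd : fderiv ℂ F p = ∑' ab : ℕ × ℕ, phi ab.1 ab.2 (c ab.1 ab.2) p := (main p).1.fderiv
    have hsum : HasSum (fun ab : ℕ × ℕ => phi ab.1 ab.2 (c ab.1 ab.2) p)
        (∑' ab : ℕ × ℕ, phi ab.1 ab.2 (c ab.1 ab.2) p) := (main p).2.hasSum
    have happ := (ContinuousLinearMap.apply ℂ ℂ ((I * p.1, -(I * p.2)) : ℂ × ℂ)).hasSum hsum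
    rw [← hfd] at happ
    have : (fun ab : ℕ × ℕ =>
        (ContinuousLinearMap.apply ℂ ℂ ((I * p.1, -(I * p.2)) : ℂ × ℂ))
          (phi ab.1 ab.2 (c ab.1 ab.2) p))
        = fun ab : ℕ × ℕ =>
          (I * ((ab.1 : ℂ) - (ab.2 : ℂ)) * c ab.1 ab.2) * p.1 ^ ab.1 * p.2 ^ ab.2 := by
      funext ab
      exact phi_apply_X ab.1 ab.2 (c ab.1 ab.2) p
    rwa [this] at happ

/-- Let `X₁ = iz∂/∂z − iw∂/∂w` on `ℂ²` and let `Y = f∂/∂z + g∂/∂w` be a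
holomorphic (entire) vector field with power series expansions
`f = Σ cf a b z^a w^b`, `g = Σ cg a b z^a w^b`. If `[[Y, X₁], X₁] = −Y`, then
the coefficient of `z^a w^b` in `f` vanishes unless `a − b ∈ {0, 2}`, and the
coefficient of `z^a w^b` in `g` vanishes unless `b − a ∈ {0, 2}`. -/
theorem coeff_vanish_of_double_bracket
    (f g : ℂ × ℂ → ℂ) (hf : Differentiable ℂ f) (hg : Differentiable ℂ g)
    (cf cg : ℕ → ℕ → ℂ)
    (hcf : ∀ p : ℂ × ℂ, HasSum (fun ab : ℕ × ℕ => cf ab.1 ab.2 * p.1 ^ ab.1 * p.2 ^ ab.2) (f p))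
    (hcg : ∀ p : ℂ × ℂ, HasSum (fun ab : ℕ × ℕ => cg ab.1 ab.2 * p.1 ^ ab.1 * p.2 ^ ab.2) (g p)) :
    let X₁ : ℂ × ℂ → ℂ × ℂ := fun p => (I * p.1, -(I * p.2))
    let Y : ℂ × ℂ → ℂ × ℂ := fun p => (f p, g p)
    (bracket (bracket Y X₁) X₁ = fun p => -Y p) →
      (∀ a b : ℕ, a ≠ b → a ≠ b + 2 → cf a b = 0) ∧
      (∀ a b : ℕ, b ≠ a → b ≠ a + 2 → cg a b = 0) := by
  intro X₁ Y hbr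
  have hX1def : X₁ = fun p : ℂ × ℂ => (I * p.1, -(I * p.2)) := rfl
  have hYdef : Y = fun p : ℂ × ℂ => (f p, g p) := rfl
  -- the operator L
  set Lf : ℂ × ℂ → ℂ := fun q => fderiv ℂ f q (I * q.1, -(I * q.2)) with hLfdef
  set Lg : ℂ × ℂ → ℂ := fun q => fderiv ℂ g q (I * q.1, -(I * q.2)) with hLgdef
  obtain ⟨-, hLf⟩ := expand_L cf f hcf
  obtain ⟨-, hLg⟩ := expand_L cg g hcg
  obtain ⟨hLfd, hLLf⟩ := expand_L (fun a b => I * ((a : ℂ) - (b : ℂ)) * cf a b) Lf hLf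
  obtain ⟨hLgd, hLLg⟩ := expand_L (fun a b => I * ((a : ℂ) - (b : ℂ)) * cg a b) Lg hLg
  set LLf : ℂ × ℂ → ℂ := fun q => fderiv ℂ Lf q (I * q.1, -(I * q.2)) with hLLfdef
  set LLg : ℂ × ℂ → ℂ := fun q => fderiv ℂ Lg q (I * q.1, -(I * q.2)) with hLLgdef
  -- the linear map A = DX₁
  set A : ℂ × ℂ →L[ℂ] ℂ × ℂ :=
    (I • ContinuousLinearMap.fst ℂ ℂ ℂ).prod (-(I • ContinuousLinearMap.snd ℂ ℂ ℂ)) with hAdef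
  have hA : ∀ v : ℂ × ℂ, A v = (I * v.1, -(I * v.2)) := by
    intro v
    simp [hAdef, ContinuousLinearMap.prod_apply, smul_eq_mul]
  have hX1A : X₁ = ⇑A := funext fun v => (hA v).symm
  have hdX : ∀ p : ℂ × ℂ, fderiv ℂ X₁ p = A := by
    intro p; rw [hX1A]; exact A.fderiv
  -- first bracket
  have hB : bracket Y X₁ = fun p : ℂ × ℂ => (I * f p - Lf p, -(I * g p) - Lg p) := by
    funext p
    have hdY : fderiv ℂ Y p = (fderiv ℂ f p).prod (fderiv ℂ g p) :=
      (((hf p).hasFDerivAt).prodMk ((hg p).hasFDerivAt)).fderiv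
    show fderiv ℂ X₁ p (Y p) - fderiv ℂ Y p (X₁ p) = _
    rw [hdX p, hdY, hX1def, hYdef, hA]
    simp [hLfdef, hLgdef, ContinuousLinearMap.prod_apply, Prod.mk_sub_mk, sub_eq_add_neg]
  -- second bracket
  have hB1 : ∀ p : ℂ × ℂ, HasFDerivAt (fun q : ℂ × ℂ => I * f q - Lf q)
      (I • fderiv ℂ f p - fderiv ℂ Lf p) p :=
    fun p => (((hf p).hasFDerivAt).const_mul I).sub ((hLfd p).hasFDerivAt)
  have hB2 : ∀ p : ℂ × ℂ, HasFDerivAt (fun q : ℂ × ℂ => -(I * g q) - Lg q)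
      (-(I • fderiv ℂ g p) - fderiv ℂ Lg p) p :=
    fun p => ((((hg p).hasFDerivAt).const_mul I).neg).sub ((hLgd p).hasFDerivAt)
  have hBB : ∀ p : ℂ × ℂ,
      (I * (I * f p - Lf p) - (I * Lf p - LLf p),
        -(I * (-(I * g p) - Lg p)) - (-(I * Lg p) - LLg p)) = (-(f p), -(g p)) := by
    intro p
    have h1 := congrFun hbr p
    rw [hB] at h1
    have hdB : fderiv ℂ (fun p : ℂ × ℂ => (I * f p - Lf p, -(I * g p) - Lg p)) p
        = (I • fderiv ℂ f p - fderiv ℂ Lf p).prod (-(I • fderiv ℂ g p) - fderiv ℂ Lg p) :=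
      ((hB1 p).prodMk (hB2 p)).fderiv
    show _ = (-(f p), -(g p))
    rw [show (bracket (fun p : ℂ × ℂ => (I * f p - Lf p, -(I * g p) - Lg p)) X₁) p
        = fderiv ℂ X₁ p ((I * f p - Lf p, -(I * g p) - Lg p))
          - fderiv ℂ (fun p : ℂ × ℂ => (I * f p - Lf p, -(I * g p) - Lg p)) p (X₁ p) from rfl]
      at h1
    rw [hdX p, hdB, hX1def, hA] at h1
    simp only [ContinuousLinearMap.prod_apply, ContinuousLinearMap.sub_apply,
      ContinuousLinearMap.neg_apply, ContinuousLinearMap.smul_apply, smul_eq_mul,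
      Prod.mk_sub_mk, hYdef, Prod.neg_mk] at h1
    exact h1
  -- scalar equations
  have hfe : ∀ p : ℂ × ℂ, LLf p - 2 * I * Lf p = 0 := by
    intro p
    have h1 := (Prod.ext_iff.mp (hBB p)).1
    linear_combination h1 - f p * Complex.I_sq
  have hge : ∀ p : ℂ × ℂ, LLg p + 2 * I * Lg p = 0 := by
    intro p
    have h1 := (Prod.ext_iff.mp (hBB p)).2
    linear_combination h1 - g p * Complex.I_sq
  -- coefficient equations
  have hcfz : ∀ a b : ℕ,
      I * ((a : ℂ) - b) * (I * ((a : ℂ) - b) * cf a b)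
        - 2 * I * (I * ((a : ℂ) - b) * cf a b) = 0 := by
    apply twovar_zero
    intro p
    have hs := (hLLf p).sub ((hLf p).mul_left (2 * I))
    rw [hfe p] at hs
    have heq : (fun ab : ℕ × ℕ =>
        I * ((ab.1 : ℂ) - ab.2) * (I * ((ab.1 : ℂ) - ab.2) * cf ab.1 ab.2) * p.1 ^ ab.1 * p.2 ^ ab.2
          - 2 * I * (I * ((ab.1 : ℂ) - ab.2) * cf ab.1 ab.2 * p.1 ^ ab.1 * p.2 ^ ab.2))
        = fun ab : ℕ × ℕ =>
          (I * ((ab.1 : ℂ) - ab.2) * (I * ((ab.1 : ℂ) - ab.2) * cf ab.1 ab.2)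
            - 2 * I * (I * ((ab.1 : ℂ) - ab.2) * cf ab.1 ab.2)) * p.1 ^ ab.1 * p.2 ^ ab.2 := by
      funext ab; ring
    rwa [heq] at hs
  have hcgz : ∀ a b : ℕ,
      I * ((a : ℂ) - b) * (I * ((a : ℂ) - b) * cg a b)
        + 2 * I * (I * ((a : ℂ) - b) * cg a b) = 0 := by
    apply twovar_zero
    intro p
    have hs := (hLLg p).add ((hLg p).mul_left (2 * I))
    rw [hge p] at hs
    have heq : (fun ab : ℕ × ℕ =>
        I * ((ab.1 : ℂ) - ab.2) * (I * ((ab.1 : ℂ) - ab.2) * cg ab.1 ab.2) * p.1 ^ ab.1 * p.2 ^ ab.2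
          + 2 * I * (I * ((ab.1 : ℂ) - ab.2) * cg ab.1 ab.2 * p.1 ^ ab.1 * p.2 ^ ab.2))
        = fun ab : ℕ × ℕ =>
          (I * ((ab.1 : ℂ) - ab.2) * (I * ((ab.1 : ℂ) - ab.2) * cg ab.1 ab.2)
            + 2 * I * (I * ((ab.1 : ℂ) - ab.2) * cg ab.1 ab.2)) * p.1 ^ ab.1 * p.2 ^ ab.2 := by
      funext ab; ring
    rwa [heq] at hs
  constructor
  · intro a b hab hab2
    have h1 := hcfz a b
    set t : ℂ := (a : ℂ) - b with ht
    have ht0 : t ≠ 0 := by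
      rw [ht, sub_ne_zero]
      exact_mod_cast hab
    have ht2 : t - 2 ≠ 0 := by
      rw [ht, sub_ne_zero]
      intro hc
      apply hab2
      have : (a : ℂ) = ((b + 2 : ℕ) : ℂ) := by push_cast; linear_combination hc
      exact_mod_cast this
    have h2 : -(t * (t - 2)) * cf a b = 0 := by
      linear_combination h1 - (t * t - 2 * t) * cf a b * Complex.I_sq
    rcases mul_eq_zero.mp h2 with h3 | h3
    · exact absurd h3 (by simp [ht0, ht2, sub_ne_zero, mul_ne_zero ht0 ht2])
    · exact h3
  · intro a b hab hab2
    have h1 := hcgz a b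
    set t : ℂ := (a : ℂ) - b with ht
    have ht0 : t ≠ 0 := by
      rw [ht, sub_ne_zero]
      exact fun hc => hab (by exact_mod_cast hc.symm)
    have ht2 : t + 2 ≠ 0 := by
      rw [ht]
      intro hc
      apply hab2
      have : (b : ℂ) = ((a + 2 : ℕ) : ℂ) := by push_cast; linear_combination -hc
      exact_mod_cast this
    have h2 : -(t * (t + 2)) * cg a b = 0 := by
      linear_combination h1 - (t * t + 2 * t) * cg a b * Complex.I_sq
    rcases mul_eq_zero.mp h2 with h3 | h3
    · exact absurd h3 (by simp [mul_ne_zero ht0 ht2])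
    · exact h3
end

section
/- On ℂ⁴, let V₁ = (1 + α z₁²)∂/∂z₁ + β z₁z₂ ∂/∂z₂ + (γ z₁z₃ + δ z₂z₄)∂/∂z₃ + ε z₁z₄ ∂/∂z₄ and W₁ = (i − iα z₁²)∂/∂z₁ − iβ z₁z₂ ∂/∂z₂ + (−iγ z₁z₃ − iδ z₂z₄)∂/∂z₃ − iε z₁z₄ ∂/∂z₄ for complex constants α,β,γ,δ,ε. Then [V₁, W₁] = −2i(2α z₁ ∂/∂z₁ + β z₂ ∂/∂z₂ + γ z₃ ∂/∂z₃ + ε z₄ ∂/∂z₄). -/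
open Complex

/-- On `ℂ⁴`, with
`V₁ = (1 + αz₁²)∂/∂z₁ + βz₁z₂∂/∂z₂ + (γz₁z₃ + δz₂z₄)∂/∂z₃ + εz₁z₄∂/∂z₄` and
`W₁ = (i − iαz₁²)∂/∂z₁ − iβz₁z₂∂/∂z₂ + (−iγz₁z₃ − iδz₂z₄)∂/∂z₃ − iεz₁z₄∂/∂z₄`,
one has `[V₁, W₁] = −2i(2αz₁∂/∂z₁ + βz₂∂/∂z₂ + γz₃∂/∂z₃ + εz₄∂/∂z₄)`. -/
theorem bracket_V1_W1 (α β γ δ ε : ℂ) :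
    let V₁ : (Fin 4 → ℂ) → (Fin 4 → ℂ) := fun z =>
      ![1 + α * (z 0) ^ 2, β * z 0 * z 1, γ * z 0 * z 2 + δ * z 1 * z 3,
        ε * z 0 * z 3]
    let W₁ : (Fin 4 → ℂ) → (Fin 4 → ℂ) := fun z =>
      ![I - I * α * (z 0) ^ 2, -(I * β * z 0 * z 1),
        -(I * γ * z 0 * z 2) - I * δ * z 1 * z 3, -(I * ε * z 0 * z 3)]
    bracket V₁ W₁ = fun z =>
      ![(-2 * I) * (2 * α * z 0), (-2 * I) * (β * z 1),
        (-2 * I) * (γ * z 2), (-2 * I) * (ε * z 3)] := by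
  intro V₁ W₁
  funext z
  -- componentwise derivatives of V₁
  have hV0 : HasFDerivAt (fun x : Fin 4 → ℂ => V₁ x 0)
      (α • (z 0 • (ContinuousLinearMap.proj 0 : (Fin 4 → ℂ) →L[ℂ] ℂ) +
        z 0 • ContinuousLinearMap.proj 0)) z := by
    have e : (fun x : Fin 4 → ℂ => V₁ x 0) = fun x => 1 + α * (x 0 * x 0) := by
      funext x; show 1 + α * (x 0) ^ 2 = _; rw [sq]
    rw [e]
    exact HasFDerivAt.const_add 1
      (((hasFDerivAt_apply (𝕜 := ℂ) 0 z).mul (hasFDerivAt_apply (𝕜 := ℂ) 0 z)).const_mul α)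
  have hV1 : HasFDerivAt (fun x : Fin 4 → ℂ => V₁ x 1) _ z :=
    ((hasFDerivAt_apply (𝕜 := ℂ) 0 z).const_mul β).mul (hasFDerivAt_apply (𝕜 := ℂ) 1 z)
  have hV2 : HasFDerivAt (fun x : Fin 4 → ℂ => V₁ x 2) _ z :=
    (((hasFDerivAt_apply (𝕜 := ℂ) 0 z).const_mul γ).mul (hasFDerivAt_apply (𝕜 := ℂ) 2 z)).add
      (((hasFDerivAt_apply (𝕜 := ℂ) 1 z).const_mul δ).mul (hasFDerivAt_apply (𝕜 := ℂ) 3 z))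
  have hV3 : HasFDerivAt (fun x : Fin 4 → ℂ => V₁ x 3) _ z :=
    ((hasFDerivAt_apply (𝕜 := ℂ) 0 z).const_mul ε).mul (hasFDerivAt_apply (𝕜 := ℂ) 3 z)
  -- componentwise derivatives of W₁
  have hW0 : HasFDerivAt (fun x : Fin 4 → ℂ => W₁ x 0)
      (-((I * α) • (z 0 • (ContinuousLinearMap.proj 0 : (Fin 4 → ℂ) →L[ℂ] ℂ) +
        z 0 • ContinuousLinearMap.proj 0))) z := by
    have e : (fun x : Fin 4 → ℂ => W₁ x 0) = fun x => I - I * α * (x 0 * x 0) := by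
      funext x; show I - I * α * (x 0) ^ 2 = _; rw [sq]
    rw [e]
    exact HasFDerivAt.const_sub
      (((hasFDerivAt_apply (𝕜 := ℂ) 0 z).mul (hasFDerivAt_apply (𝕜 := ℂ) 0 z)).const_mul (I * α)) I
  have hW1 : HasFDerivAt (fun x : Fin 4 → ℂ => W₁ x 1) _ z :=
    (((hasFDerivAt_apply (𝕜 := ℂ) 0 z).const_mul (I * β)).mul (hasFDerivAt_apply (𝕜 := ℂ) 1 z)).neg
  have hW2 : HasFDerivAt (fun x : Fin 4 → ℂ => W₁ x 2) _ z :=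
    ((((hasFDerivAt_apply (𝕜 := ℂ) 0 z).const_mul (I * γ)).mul (hasFDerivAt_apply (𝕜 := ℂ) 2 z)).neg).sub
      (((hasFDerivAt_apply (𝕜 := ℂ) 1 z).const_mul (I * δ)).mul (hasFDerivAt_apply (𝕜 := ℂ) 3 z))
  have hW3 : HasFDerivAt (fun x : Fin 4 → ℂ => W₁ x 3) _ z :=
    (((hasFDerivAt_apply (𝕜 := ℂ) 0 z).const_mul (I * ε)).mul (hasFDerivAt_apply (𝕜 := ℂ) 3 z)).neg
  have hVd : DifferentiableAt ℂ V₁ z := by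
    rw [differentiableAt_pi]
    intro i
    fin_cases i
    exacts [hV0.differentiableAt, hV1.differentiableAt, hV2.differentiableAt,
      hV3.differentiableAt]
  have hWd : DifferentiableAt ℂ W₁ z := by
    rw [differentiableAt_pi]
    intro i
    fin_cases i
    exacts [hW0.differentiableAt, hW1.differentiableAt, hW2.differentiableAt,
      hW3.differentiableAt]
  have eV : ∀ i v, fderiv ℂ V₁ z v i = fderiv ℂ (fun x => V₁ x i) z v := by
    intro i v
    rw [(hasFDerivAt_pi'.1 hVd.hasFDerivAt i).fderiv]
    rfl
  have eW : ∀ i v, fderiv ℂ W₁ z v i = fderiv ℂ (fun x => W₁ x i) z v := by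
    intro i v
    rw [(hasFDerivAt_pi'.1 hWd.hasFDerivAt i).fderiv]
    rfl
  have key : ∀ i, bracket V₁ W₁ z i =
      fderiv ℂ (fun x => W₁ x i) z (V₁ z) - fderiv ℂ (fun x => V₁ x i) z (W₁ z) := by
    intro i; rw [← eV i, ← eW i]; rfl
  funext i
  fin_cases i
  · show bracket V₁ W₁ z 0 = -2 * I * (2 * α * z 0)
    rw [key 0, hW0.fderiv, hV0.fderiv]
    simp [V₁, W₁]
    ring
  · show bracket V₁ W₁ z 1 = -2 * I * (β * z 1)
    rw [key 1, hW1.fderiv, hV1.fderiv]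
    simp [V₁, W₁]
    ring
  · show bracket V₁ W₁ z 2 = -2 * I * (γ * z 2)
    rw [key 2, hW2.fderiv, hV2.fderiv]
    simp [V₁, W₁]
    ring
  · show bracket V₁ W₁ z 3 = -2 * I * (ε * z 3)
    rw [key 3, hW3.fderiv, hV3.fderiv]
    simp [V₁, W₁]
    ring
end

section
/- On ℂⁿ (n ≥ 2), let Z_k = i z_k ∂/∂z_k for k = 1,…,n, and let V_j = Σ_k f_j^k ∂/∂z_k be a polynomial vector field of degree ≤ 2 with no linear terms and f_j^k(0) = δ_j^k. If [V_j, Z_k] = 0 for all k ≠ j, then V_j = Σ_{k≠j} α_j^k z_k z_j ∂/∂z_k + (1 + α_j^j z_j²) ∂/∂z_j for some complex constants α_j^k. -/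
/-!
Write `V^i = δ_ij + Q_i` with quadratic forms `Q_i`. Since `Z_k` is linear, `[V, Z_k] = 0` says
`z_k ∂_k Q_i = δ_ik Q_i` for every `k ≠ j`. For `k ∉ {i, j}` this forces `∂_k Q_i = 0`, so `Q_i`
only involves `z_i` and `z_j`, and Euler's identity `2 Q_i = Σ_k z_k ∂_k Q_i` reduces to
`2 Q_j = z_j ∂_j Q_j`, resp. `Q_i = z_j ∂_j Q_i` for `i ≠ j`; in both cases `Q_i` is a multiple
of `z_i z_j`.
-/

open Complex

open Matrix Finset

section Algebra

variable {ι K : Type*} [Fintype ι]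

theorem dotProduct_mulVec_self_eq_sum_sum [CommSemiring K] (C : Matrix ι ι K) (z : ι → K) :
    z ⬝ᵥ C *ᵥ z = ∑ l, ∑ m, C l m * z l * z m := by
  rw [dot_mulVec_eq_sum_sum, sum_comm]
  exact sum_congr rfl fun _ _ => sum_congr rfl fun _ _ => by ring

theorem dotProduct_add_transpose_mulVec_self [CommSemiring K] (C : Matrix ι ι K) (z : ι → K) :
    z ⬝ᵥ (C + Cᵀ) *ᵥ z = 2 * (z ⬝ᵥ C *ᵥ z) := by
  rw [add_mulVec, dotProduct_add, mulVec_transpose, dotProduct_comm z (z ᵥ* C),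
    ← dotProduct_mulVec, two_mul]

theorem eq_zero_of_forall_mul_dotProduct_eq_zero [CommSemiring K] [DecidableEq ι] {v : ι → K}
    {k : ι} (h : ∀ p : ι → K, p k * (v ⬝ᵥ p) = 0) : v = 0 := by
  have hk : v k = 0 := by simpa using h (Pi.single k 1)
  funext m
  obtain rfl | hm := eq_or_ne m k
  · exact hk
  · have hkm := h (Pi.single k 1 + Pi.single m 1)
    rw [Pi.add_apply, dotProduct_add, dotProduct_single, dotProduct_single, Pi.single_eq_same,
      Pi.single_eq_of_ne' hm] at hkm
    simpa [hk] using hkm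

theorem exists_dotProduct_mulVec_self_eq_mul_mul [CommRing K] [IsDomain K] [NeZero (2 : K)]
    [DecidableEq ι] (C : Matrix ι ι K) (i j : ι)
    (h : ∀ k, k ≠ j → ∀ p : ι → K, p k * ((C + Cᵀ) *ᵥ p) k = if i = k then p ⬝ᵥ C *ᵥ p else 0) :
    ∃ a, ∀ p, p ⬝ᵥ C *ᵥ p = a * p i * p j := by
  set S := C + Cᵀ
  have hS_zero : ∀ k, k ≠ i → k ≠ j → ∀ m, S m k = 0 := by
    intro k hki hkj m
    have hrow : S k = 0 := eq_zero_of_forall_mul_dotProduct_eq_zero fun p => by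
      have hp := h k hkj p
      rwa [if_neg (Ne.symm hki)] at hp
    exact (add_comm _ _).trans (congrFun hrow m)
  have euler : ∀ p, 2 * (p ⬝ᵥ C *ᵥ p) = p j * (S *ᵥ p) j + if i = j then 0 else p ⬝ᵥ C *ᵥ p := by
    intro p
    rw [← dotProduct_add_transpose_mulVec_self, dotProduct, ← add_sum_erase _ _ (mem_univ j)]
    congr 1
    rw [sum_congr rfl fun k hk => h k (ne_of_mem_erase hk) p, sum_ite_eq]
    simp
  rcases eq_or_ne i j with rfl | hij
  · refine ⟨C i i, fun p => mul_left_cancel₀ (two_ne_zero' K) ?_⟩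
    have hSp : (S *ᵥ p) i = S i i * p i :=
      Fintype.sum_eq_single i fun m hm => show S i m * p m = 0 by rw [hS_zero m hm hm, zero_mul]
    rw [euler, hSp, if_pos rfl]
    simp only [S, Matrix.add_apply, transpose_apply]
    ring
  · have hSp : ∀ p, (S *ᵥ p) j = S j j * p j + S j i * p i := fun p =>
      Fintype.sum_eq_add j i hij.symm fun m hm =>
        show S j m * p m = 0 by rw [hS_zero m hm.2 hm.1, zero_mul]
    have hQ : ∀ p, p ⬝ᵥ C *ᵥ p = p j * (S j j * p j + S j i * p i) := fun p => by
      linear_combination (euler p).trans (by rw [hSp, if_neg hij])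
    have hSjj : S j j = 0 := by
      have hj := h i hij (Pi.single j 1)
      rw [Pi.single_eq_of_ne hij, if_pos rfl, hQ, Pi.single_eq_same, Pi.single_eq_of_ne hij] at hj
      linear_combination -hj
    exact ⟨S j i, fun p => by rw [hQ, hSjj]; ring⟩

end Algebra

section Calculus

variable {ι 𝕜 : Type*} [Fintype ι] [NontriviallyNormedField 𝕜]

theorem hasFDerivAt_dotProduct_mulVec_self (C : Matrix ι ι 𝕜) (p : ι → 𝕜) :
    HasFDerivAt (fun z => z ⬝ᵥ C *ᵥ z)
      (∑ k, ((C + Cᵀ) *ᵥ p) k • ContinuousLinearMap.proj (R := 𝕜) (φ := fun _ : ι => 𝕜) k) p := by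
  have h := HasFDerivAt.fun_sum (u := univ) fun l _ => (hasFDerivAt_apply (𝕜 := 𝕜) l p).mul
    (HasFDerivAt.fun_sum (u := univ) fun m _ => (hasFDerivAt_apply (𝕜 := 𝕜) m p).const_mul (C l m))
  refine h.congr_fderiv ?_
  ext w
  simp only [_root_.sum_apply, _root_.add_apply, _root_.smul_apply, ContinuousLinearMap.proj_apply,
    smul_eq_mul]
  change ∑ l, (p l * (C *ᵥ w) l + (C *ᵥ p) l * w l) = ((C + Cᵀ) *ᵥ p) ⬝ᵥ w
  rw [sum_add_distrib]
  change p ⬝ᵥ C *ᵥ w + (C *ᵥ p) ⬝ᵥ w = _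
  rw [add_mulVec, add_dotProduct, mulVec_transpose, dotProduct_mulVec, add_comm]

theorem hasFDerivAt_pi_const_add_dotProduct_mulVec_self (b : ι → 𝕜) (Q : ι → Matrix ι ι 𝕜)
    (p : ι → 𝕜) :
    HasFDerivAt (fun z i => b i + z ⬝ᵥ Q i *ᵥ z)
      (ContinuousLinearMap.pi fun i =>
        ∑ k, ((Q i + (Q i)ᵀ) *ᵥ p) k •
          ContinuousLinearMap.proj (R := 𝕜) (φ := fun _ : ι => 𝕜) k) p :=
  hasFDerivAt_pi.2 fun i => (hasFDerivAt_dotProduct_mulVec_self (Q i) p).const_add (b i)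

theorem bracket_const_add_dotProduct_mulVec_self_single_apply [DecidableEq ι] (b : ι → ℂ)
    (Q : ι → Matrix ι ι ℂ) (c : ℂ) (k : ι) (p : ι → ℂ) (i : ι) :
    bracket (fun z i => b i + z ⬝ᵥ Q i *ᵥ z) (fun z => Pi.single k (c * z k)) p i =
      c * ((if i = k then b k + p ⬝ᵥ Q k *ᵥ p else 0) - p k * ((Q i + (Q i)ᵀ) *ᵥ p) k) := by
  have hZ : (fun z : ι → ℂ => Pi.single k (c * z k)) =
      ⇑(c • (ContinuousLinearMap.single ℂ (fun _ : ι => ℂ) k).comp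
        (ContinuousLinearMap.proj k)) := by
    funext z i; simp [Pi.single_apply]
  rw [bracket, hZ, ContinuousLinearMap.fderiv,
    (hasFDerivAt_pi_const_add_dotProduct_mulVec_self b Q p).fderiv]
  simp only [_root_.smul_apply, ContinuousLinearMap.comp_apply, ContinuousLinearMap.proj_apply,
    ContinuousLinearMap.single_apply, ContinuousLinearMap.coe_pi', _root_.sum_apply,
    Pi.single_apply, smul_eq_mul, mul_ite, mul_zero, sum_ite_eq', mem_univ, ↓reduceIte,
    Pi.sub_apply, Pi.smul_apply]
  split_ifs <;> ring

end Calculus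

theorem quadratic_field_form_general (n : ℕ) (j : Fin n)
    (V : (Fin n → ℂ) → (Fin n → ℂ)) (q : Fin n → Fin n → Fin n → ℂ)
    (hV : ∀ z : Fin n → ℂ, ∀ k : Fin n,
      V z k = (if k = j then 1 else 0) + ∑ l, ∑ m, q k l m * z l * z m)
    (Z : Fin n → (Fin n → ℂ) → (Fin n → ℂ))
    (hZ : ∀ k : Fin n, Z k = fun z => fun m => if m = k then I * z k else 0)
    (hbr : ∀ k : Fin n, k ≠ j → bracket V (Z k) = 0) :
    ∃ α : Fin n → ℂ, ∀ z : Fin n → ℂ, ∀ k : Fin n,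
      V z k = (if k = j then 1 else 0) + α k * z k * z j := by
  set Q : Fin n → Matrix (Fin n) (Fin n) ℂ := q
  have hVq : V = fun z k => (if k = j then 1 else 0) + z ⬝ᵥ Q k *ᵥ z := by
    funext z k; rw [hV, dotProduct_mulVec_self_eq_sum_sum]
  have hZk : ∀ k, Z k = fun z => Pi.single k (I * z k) := by
    intro k; rw [hZ]; funext z m; rw [Pi.single_apply]
  have hpartial : ∀ i, ∀ k ≠ j, ∀ p : Fin n → ℂ,
      p k * ((Q i + (Q i)ᵀ) *ᵥ p) k = if i = k then p ⬝ᵥ Q i *ᵥ p else 0 := by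
    intro i k hk p
    have h := congrFun (congrFun (hbr k hk) p) i
    rw [hVq, hZk, bracket_const_add_dotProduct_mulVec_self_single_apply, Pi.zero_apply,
      Pi.zero_apply, mul_eq_zero, or_iff_right I_ne_zero, sub_eq_zero, if_neg hk, zero_add] at h
    rw [← h]
    split_ifs with hik
    · rw [hik]
    · rfl
  choose α hα using fun i => exists_dotProduct_mulVec_self_eq_mul_mul (Q i) i j (hpartial i)
  exact ⟨α, fun z k => by simp only [hVq, hα]⟩

/-- On `ℂⁿ` (`n ≥ 2`), let `Z_k = i z_k ∂/∂z_k` and let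
`V = Σ_k f^k ∂/∂z_k` be a polynomial vector field of degree ≤ 2 with no linear
terms and `f^k(0) = δ_j^k` (written as a constant plus a quadratic part with
coefficients `q`). If `[V, Z_k] = 0` for every `k ≠ j`, then
`V = Σ_{k≠j} α^k z_k z_j ∂/∂z_k + (1 + α^j z_j²) ∂/∂z_j` for some constants `α^k`. -/
theorem quadratic_field_form (n : ℕ) (hn : 2 ≤ n) (j : Fin n)
    (V : (Fin n → ℂ) → (Fin n → ℂ)) (q : Fin n → Fin n → Fin n → ℂ)
    (hV : ∀ z : Fin n → ℂ, ∀ k : Fin n,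
      V z k = (if k = j then 1 else 0) + ∑ l, ∑ m, q k l m * z l * z m)
    (Z : Fin n → (Fin n → ℂ) → (Fin n → ℂ))
    (hZ : ∀ k : Fin n, Z k = fun z => fun m => if m = k then I * z k else 0)
    (hbr : ∀ k : Fin n, k ≠ j → bracket V (Z k) = 0) :
    ∃ α : Fin n → ℂ, ∀ z : Fin n → ℂ, ∀ k : Fin n,
      V z k = (if k = j then 1 else 0) + α k * z k * z j :=
  quadratic_field_form_general n j V q hV Z hZ hbr
end
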